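/- arXiv:2503.08499 — 11 statements merged into one kernel-verified Lean document; each statement's English description precedes it below -/
import Mathlib

section
/- Let r be a natural number and let m_1 ≤ m_2 ≤ … ≤ m_r be integers with each m_j ≥ 2. Suppose that Θ(A) = -2 + Σ_{j=1}^r (1 - 1/m_j) is positive, that α(A) = 2/Θ(A) is a positive integer, and that m_j divides α(A) for every j ∈ {1,…,r}. Then 3 ≤ r ≤ 6. -/
/-!
Each summand `1 - 1/m` lies in `[1/2, 1)`, so `r/2 - 2 ≤ Θ ≤ r - 2`, and positivity of `Θ`
gives `r ≥ 3`. On the other side `Θ = 2/α`, where `α` is a positive multiple of some `m_j ≥ 2`,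
so `Θ ≤ 1`, whence `r/2 - 2 ≤ 1`.
-/

section OneSubInv

variable {K ι : Type*} [Field K] [LinearOrder K] [IsStrictOrderedRing K]

lemma one_sub_inv_natCast_le_one (n : ℕ) : 1 - 1 / (n : K) ≤ 1 :=
  sub_le_self _ (by positivity)

lemma half_le_one_sub_inv_natCast {n : ℕ} (hn : 2 ≤ n) : 1 / 2 ≤ 1 - 1 / (n : K) := by
  have : 1 / (n : K) ≤ 1 / 2 := one_div_le_one_div_of_le two_pos (by exact_mod_cast hn)
  linarith

lemma sum_one_sub_inv_natCast_le_card (s : Finset ι) (m : ι → ℕ) :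
    ∑ j ∈ s, (1 - 1 / (m j : K)) ≤ s.card := by
  simpa using s.sum_le_card_nsmul _ 1 fun j _ ↦ one_sub_inv_natCast_le_one (K := K) (m j)

lemma card_div_two_le_sum_one_sub_inv_natCast (s : Finset ι) {m : ι → ℕ}
    (hm : ∀ j ∈ s, 2 ≤ m j) : (s.card : K) / 2 ≤ ∑ j ∈ s, (1 - 1 / (m j : K)) := by
  have := s.card_nsmul_le_sum _ (1 / 2 : K) fun j hj ↦ half_le_one_sub_inv_natCast (hm j hj)
  rwa [nsmul_eq_mul, mul_one_div] at this

end OneSubInv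

theorem stmt_0_general (r : ℕ) (m : Fin r → ℕ)
    (h2 : ∀ j, 2 ≤ m j)
    (Θ : ℚ) (hΘ : Θ = -2 + ∑ j, (1 - 1 / (m j : ℚ)))
    (α : ℕ) (hαpos : 0 < α) (hα : (α : ℚ) = 2 / Θ)
    (hdvd : ∀ j, m j ∣ α) :
    3 ≤ r ∧ r ≤ 6 := by
  have hΘα : Θ = 2 / α := by rw [hα, div_div_cancel₀ two_ne_zero]
  have hΘpos : 0 < Θ := hΘα ▸ by positivity
  have hupper : Θ ≤ -2 + r := by
    simpa [hΘ] using sum_one_sub_inv_natCast_le_card (K := ℚ) Finset.univ m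
  have hlower : -2 + (r : ℚ) / 2 ≤ Θ := by
    simpa [hΘ] using card_div_two_le_sum_one_sub_inv_natCast (K := ℚ) Finset.univ fun j _ ↦ h2 j
  have hr : 3 ≤ r := by exact_mod_cast (by linarith : (2 : ℚ) < r)
  have hα2 : (2 : ℚ) ≤ α := by
    have j₀ : Fin r := ⟨0, by omega⟩
    exact_mod_cast (h2 j₀).trans (Nat.le_of_dvd hαpos (hdvd j₀))
  have hΘle : Θ ≤ 1 := by
    rw [hΘα, div_le_one (by positivity)]
    exact hα2
  exact ⟨hr, by exact_mod_cast (by linarith : (r : ℚ) ≤ 6)⟩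

/-- For a nondecreasing tuple `A = (m 0, …, m (r-1))` of integers `≥ 2`, if
`Θ(A) = -2 + Σ_j (1 - 1/m j)` is positive, `α(A) = 2/Θ(A)` is a positive integer,
and every `m j` divides `α(A)`, then `3 ≤ r ≤ 6`. -/
theorem stmt_0 (r : ℕ) (m : Fin r → ℕ) (hmono : Monotone m)
    (h2 : ∀ j, 2 ≤ m j)
    (Θ : ℚ) (hΘ : Θ = -2 + ∑ j, (1 - 1 / (m j : ℚ))) (hΘpos : 0 < Θ)
    (α : ℕ) (hαpos : 0 < α) (hα : (α : ℚ) = 2 / Θ)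
    (hdvd : ∀ j, m j ∣ α) :
    3 ≤ r ∧ r ≤ 6 :=
  stmt_0_general r m h2 Θ hΘ α hαpos hα hdvd
end

section
/- Let r ∈ {5,6} and let m_1 ≤ … ≤ m_r be integers with each m_j ≥ 2 such that Θ(A) = -2 + Σ_{j=1}^r (1 - 1/m_j) > 0, α(A) = 2/Θ(A) is a positive integer, and m_j divides α(A) for every j. Then m_j = 2 for all j; moreover α(A) = 2 if r = 6 and α(A) = 4 if r = 5. -/
/-!
Multiplying `Θ = 2 / α` by `α` turns the hypothesis into `∑ α (1 - 1/m_j) = 2α + 2`. Each summand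
is at least `α / 2`, with equality exactly when `m_j = 2`; hence `r α ≤ 4α + 4`, and equality forces
every `m_j = 2`. For `r = 6` this gives `α ≤ 2`, while `2 ≤ m_j ∣ α`. For `r = 5` it gives `α ≤ 4`;
if `α ≤ 3`, every `m_j`, being a divisor of `α` that is at least `2`, equals `α`, and the identity
becomes `5 (α - 1) = 2α + 2`, which has no integer solution.
-/

open Finset

theorem one_sub_two_div_nonneg {m : ℕ} (hm : 2 ≤ m) : 0 ≤ 1 - 2 / (m : ℚ) := by
  have : (2 : ℚ) ≤ m := by exact_mod_cast hm
  rw [sub_nonneg, div_le_one (by positivity)]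
  exact this

theorem eq_two_of_one_sub_two_div_eq_zero {m : ℕ} (h : 1 - 2 / (m : ℚ) = 0) : m = 2 := by
  rcases eq_or_ne m 0 with rfl | hm
  · norm_num at h
  · rw [sub_eq_zero, eq_div_iff (by exact_mod_cast hm), one_mul] at h
    exact_mod_cast h

theorem Nat.eq_of_two_le_of_dvd_of_le_three {m a : ℕ} (hm : 2 ≤ m) (hdvd : m ∣ a) (ha : 0 < a)
    (ha3 : a ≤ 3) : m = a := by
  have := Nat.le_of_dvd ha hdvd
  interval_cases a <;> interval_cases m <;> simp_all

section

variable {ι : Type*} [Fintype ι] {m : ι → ℕ} {α : ℚ}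

theorem sum_mul_one_sub_inv_eq_of_mul_eq_two {Θ : ℚ}
    (hΘ : Θ = -2 + ∑ j, (1 - 1 / (m j : ℚ))) (hα : α * Θ = 2) :
    ∑ j, α * (1 - 1 / (m j : ℚ)) = 2 * α + 2 := by
  rw [← mul_sum]
  rw [hΘ] at hα
  linarith

theorem two_mul_sum_mul_one_sub_inv_sub_card_mul :
    2 * ∑ j, α * (1 - 1 / (m j : ℚ)) - Fintype.card ι * α = ∑ j, α * (1 - 2 / (m j : ℚ)) := by
  rw [mul_sum, ← Finset.card_univ, ← nsmul_eq_mul, ← sum_const, ← sum_sub_distrib]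
  refine sum_congr rfl fun j _ => ?_
  ring

theorem card_mul_le_two_mul_sum_mul_one_sub_inv (h2 : ∀ j, 2 ≤ m j) (hα : 0 ≤ α) :
    Fintype.card ι * α ≤ 2 * ∑ j, α * (1 - 1 / (m j : ℚ)) := by
  rw [← sub_nonneg, two_mul_sum_mul_one_sub_inv_sub_card_mul]
  exact sum_nonneg fun j _ => mul_nonneg hα (one_sub_two_div_nonneg (h2 j))

theorem eq_two_of_two_mul_sum_mul_one_sub_inv_eq_card_mul (h2 : ∀ j, 2 ≤ m j) (hα : 0 < α)
    (h : 2 * ∑ j, α * (1 - 1 / (m j : ℚ)) = Fintype.card ι * α) (j : ι) : m j = 2 := by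
  rw [← sub_eq_zero, two_mul_sum_mul_one_sub_inv_sub_card_mul,
    sum_eq_zero_iff_of_nonneg fun j _ => mul_nonneg hα.le (one_sub_two_div_nonneg (h2 j))] at h
  exact eq_two_of_one_sub_two_div_eq_zero
    ((mul_eq_zero.mp (h j (mem_univ j))).resolve_left hα.ne')

end

theorem stmt_1_general (r : ℕ) (hr : r = 5 ∨ r = 6) (m : Fin r → ℕ)
    (h2 : ∀ j, 2 ≤ m j)
    (Θ : ℚ) (hΘ : Θ = -2 + ∑ j, (1 - 1 / (m j : ℚ)))
    (α : ℕ) (hαpos : 0 < α) (hα : (α : ℚ) = 2 / Θ)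
    (hdvd : ∀ j, m j ∣ α) :
    (∀ j, m j = 2) ∧ (r = 6 → α = 2) ∧ (r = 5 → α = 4) := by
  have hαQ : (0 : ℚ) < α := by exact_mod_cast hαpos
  have hΘne : Θ ≠ 0 := by
    rintro rfl
    rw [div_zero] at hα
    exact hαQ.ne' hα
  have hsum : ∑ j, (α : ℚ) * (1 - 1 / (m j : ℚ)) = 2 * α + 2 :=
    sum_mul_one_sub_inv_eq_of_mul_eq_two hΘ (by rw [hα, div_mul_cancel₀ _ hΘne])
  have hle := card_mul_le_two_mul_sum_mul_one_sub_inv h2 hαQ.le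
  have hall := eq_two_of_two_mul_sum_mul_one_sub_inv_eq_card_mul h2 hαQ
  rw [hsum, Fintype.card_fin] at hle hall
  rcases hr with rfl | rfl <;> push_cast at hle hall
  · have hα4 : α = 4 := by
      have hα_le : α ≤ 4 := by exact_mod_cast (by linarith : (α : ℚ) ≤ 4)
      by_contra hne
      have hm : ∀ j, m j = α := fun j =>
        Nat.eq_of_two_le_of_dvd_of_le_three (h2 j) (hdvd j) hαpos (by omega)
      simp only [hm, sum_const, card_univ, Fintype.card_fin, nsmul_eq_mul] at hsum
      rw [mul_one_sub, mul_one_div_cancel hαQ.ne'] at hsum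
      push_cast at hsum
      have hcontra : 3 * α = 7 := by exact_mod_cast (by linarith : (3 * α : ℚ) = 7)
      omega
    subst hα4
    exact ⟨hall (by norm_num), by omega, fun _ => rfl⟩
  · have hα2 : α = 2 := le_antisymm
      (by exact_mod_cast (by linarith : (α : ℚ) ≤ 2))
      ((h2 0).trans (Nat.le_of_dvd hαpos (hdvd 0)))
    subst hα2
    exact ⟨hall (by norm_num), fun _ => rfl, by omega⟩

/-- If `r ∈ {5,6}` and `A = (m 0, …, m (r-1))` is a nondecreasing tuple of integers `≥ 2`
with `Θ(A) = -2 + Σ_j (1 - 1/m j) > 0`, `α(A) = 2/Θ(A)` a positive integer, and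
`m j ∣ α(A)` for all `j`, then all `m j = 2`; moreover `α(A) = 2` if `r = 6`
and `α(A) = 4` if `r = 5`. -/
theorem stmt_1 (r : ℕ) (hr : r = 5 ∨ r = 6) (m : Fin r → ℕ) (hmono : Monotone m)
    (h2 : ∀ j, 2 ≤ m j)
    (Θ : ℚ) (hΘ : Θ = -2 + ∑ j, (1 - 1 / (m j : ℚ))) (hΘpos : 0 < Θ)
    (α : ℕ) (hαpos : 0 < α) (hα : (α : ℚ) = 2 / Θ)
    (hdvd : ∀ j, m j ∣ α) :
    (∀ j, m j = 2) ∧ (r = 6 → α = 2) ∧ (r = 5 → α = 4) :=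
  stmt_1_general r hr m h2 Θ hΘ α hαpos hα hdvd
end

section
/- Let m_1 ≤ m_2 ≤ m_3 ≤ m_4 be integers with each m_j ≥ 2 such that Θ(A) = -2 + Σ_{j=1}^4 (1 - 1/m_j) > 0, α(A) = 2/Θ(A) is a positive integer, and m_j divides α(A) for every j. Then (m_1,m_2,m_3,m_4) is one of the following six quadruples, with the indicated value of α(A): (2,2,2,3) with α = 12; (2,2,2,4) with α = 8; (2,2,2,6) with α = 6; (2,2,3,3) with α = 6; (2,2,4,4) with α = 4; (3,3,3,3) with α = 3. -/
/-!
Three entries are at least `2`, so `Θ ≥ 1/2 - 1/m₄`; since `m₄ ∣ α` we get `m₄ ≤ α` and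
`2 = α Θ ≥ m₄ (1/2 - 1/m₄) = m₄/2 - 1`, i.e. `m₄ ≤ 6`. This leaves finitely many nondecreasing
quadruples, and for each of them `α (2 m₁m₂m₃m₄ - Σ_j Π_{i ≠ j} m_i) = 2 m₁m₂m₃m₄` together with
`m₄ ∣ α` is a linear problem in `α`.
-/

def theta4 (a b c d : ℕ) : ℚ :=
  -2 + ((1 - 1 / a) + (1 - 1 / b) + (1 - 1 / c) + (1 - 1 / d))

theorem le_six_of_mul_theta4_eq_two {a b c d α : ℕ} (ha : 2 ≤ a) (hb : 2 ≤ b) (hc : 2 ≤ c)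
    (hd : 2 ≤ d) (hα : 0 < α) (hdα : d ∣ α) (h : α * theta4 a b c d = 2) : d ≤ 6 := by
  have one_div_le_half {n : ℕ} (hn : 2 ≤ n) : (1 : ℚ) / n ≤ 1 / 2 :=
    one_div_le_one_div_of_le two_pos (by exact_mod_cast hn)
  have hΘ : 1 / 2 - 1 / (d : ℚ) ≤ theta4 a b c d := by
    unfold theta4
    linarith [one_div_le_half ha, one_div_le_half hb, one_div_le_half hc]
  have hdα' : (d : ℚ) ≤ α := by exact_mod_cast Nat.le_of_dvd hα hdα
  have hd0 : (d : ℚ) ≠ 0 := by positivity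
  have : (d : ℚ) / 2 - 1 ≤ 2 := calc
    (d : ℚ) / 2 - 1 = d * (1 / 2 - 1 / d) := by field_simp
    _ ≤ α * theta4 a b c d :=
      mul_le_mul hdα' hΘ (by linarith [one_div_le_half hd]) (Nat.cast_nonneg α)
    _ = 2 := h
  exact_mod_cast (by linarith : (d : ℚ) ≤ 6)

theorem nat_eq_of_mul_theta4_eq_two {a b c d α : ℕ} (ha : a ≠ 0) (hb : b ≠ 0) (hc : c ≠ 0)
    (hd : d ≠ 0) (h : α * theta4 a b c d = 2) :
    2 * α * (a * b * c * d) =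
      2 * (a * b * c * d) + α * (b * c * d + a * c * d + a * b * d + a * b * c) := by
  unfold theta4 at h
  field_simp at h
  exact_mod_cast (by linear_combination h : (2 * α * (a * b * c * d) : ℚ) =
    2 * (a * b * c * d) + α * (b * c * d + a * c * d + a * b * d + a * b * c))

theorem eq_of_mul_theta4_eq_two {a b c d α : ℕ} (ha : 2 ≤ a) (hab : a ≤ b) (hbc : b ≤ c)
    (hcd : c ≤ d) (hα : 0 < α) (hdα : d ∣ α) (h : α * theta4 a b c d = 2) :
    (a = 2 ∧ b = 2 ∧ c = 2 ∧ d = 3 ∧ α = 12) ∨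
    (a = 2 ∧ b = 2 ∧ c = 2 ∧ d = 4 ∧ α = 8) ∨
    (a = 2 ∧ b = 2 ∧ c = 2 ∧ d = 6 ∧ α = 6) ∨
    (a = 2 ∧ b = 2 ∧ c = 3 ∧ d = 3 ∧ α = 6) ∨
    (a = 2 ∧ b = 2 ∧ c = 4 ∧ d = 4 ∧ α = 4) ∨
    (a = 3 ∧ b = 3 ∧ c = 3 ∧ d = 3 ∧ α = 3) := by
  have hd6 := le_six_of_mul_theta4_eq_two ha (by omega) (by omega) (by omega) hα hdα h
  have hnat := nat_eq_of_mul_theta4_eq_two (by omega) (by omega) (by omega) (by omega) h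
  interval_cases d <;> interval_cases c <;> interval_cases b <;> interval_cases a <;> omega

theorem stmt_2_general (m : Fin 4 → ℕ) (hmono : Monotone m)
    (h2 : ∀ j, 2 ≤ m j)
    (Θ : ℚ) (hΘ : Θ = -2 + ∑ j, (1 - 1 / (m j : ℚ)))
    (α : ℕ) (hαpos : 0 < α) (hα : (α : ℚ) = 2 / Θ)
    (hdvd : ∀ j, m j ∣ α) :
    (m 0 = 2 ∧ m 1 = 2 ∧ m 2 = 2 ∧ m 3 = 3 ∧ α = 12) ∨
    (m 0 = 2 ∧ m 1 = 2 ∧ m 2 = 2 ∧ m 3 = 4 ∧ α = 8) ∨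
    (m 0 = 2 ∧ m 1 = 2 ∧ m 2 = 2 ∧ m 3 = 6 ∧ α = 6) ∨
    (m 0 = 2 ∧ m 1 = 2 ∧ m 2 = 3 ∧ m 3 = 3 ∧ α = 6) ∨
    (m 0 = 2 ∧ m 1 = 2 ∧ m 2 = 4 ∧ m 3 = 4 ∧ α = 4) ∨
    (m 0 = 3 ∧ m 1 = 3 ∧ m 2 = 3 ∧ m 3 = 3 ∧ α = 3) := by
  -- `2 / 0 = 0`, so `α > 0` already rules out `Θ = 0`.
  have hΘ0 : Θ ≠ 0 := by
    rintro rfl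
    simp only [div_zero, Nat.cast_eq_zero] at hα
    omega
  have hαΘ : α * theta4 (m 0) (m 1) (m 2) (m 3) = 2 := by
    rw [theta4, ← Fin.sum_univ_four (fun j ↦ 1 - 1 / (m j : ℚ)), ← hΘ, hα, div_mul_cancel₀ _ hΘ0]
  exact eq_of_mul_theta4_eq_two (h2 0) (hmono (by decide)) (hmono (by decide))
    (hmono (by decide)) hαpos (hdvd 3) hαΘ

/-- If `(m 0, m 1, m 2, m 3)` is a nondecreasing quadruple of integers `≥ 2` with
`Θ(A) = -2 + Σ_j (1 - 1/m j) > 0`, `α(A) = 2/Θ(A)` a positive integer, and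
`m j ∣ α(A)` for all `j`, then the quadruple is one of the six listed ones, with
the indicated value of `α(A)`. -/
theorem stmt_2 (m : Fin 4 → ℕ) (hmono : Monotone m)
    (h2 : ∀ j, 2 ≤ m j)
    (Θ : ℚ) (hΘ : Θ = -2 + ∑ j, (1 - 1 / (m j : ℚ))) (hΘpos : 0 < Θ)
    (α : ℕ) (hαpos : 0 < α) (hα : (α : ℚ) = 2 / Θ)
    (hdvd : ∀ j, m j ∣ α) :
    (m 0 = 2 ∧ m 1 = 2 ∧ m 2 = 2 ∧ m 3 = 3 ∧ α = 12) ∨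
    (m 0 = 2 ∧ m 1 = 2 ∧ m 2 = 2 ∧ m 3 = 4 ∧ α = 8) ∨
    (m 0 = 2 ∧ m 1 = 2 ∧ m 2 = 2 ∧ m 3 = 6 ∧ α = 6) ∨
    (m 0 = 2 ∧ m 1 = 2 ∧ m 2 = 3 ∧ m 3 = 3 ∧ α = 6) ∨
    (m 0 = 2 ∧ m 1 = 2 ∧ m 2 = 4 ∧ m 3 = 4 ∧ α = 4) ∨
    (m 0 = 3 ∧ m 1 = 3 ∧ m 2 = 3 ∧ m 3 = 3 ∧ α = 3) :=
  stmt_2_general m hmono h2 Θ hΘ α hαpos hα hdvd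
end

section
/- Let m_1 ≤ m_2 ≤ m_3 be integers with each m_j ≥ 2 such that Θ(A) = -2 + Σ_{j=1}^3 (1 - 1/m_j) > 0, α(A) = 2/Θ(A) is a positive integer, and m_j divides α(A) for every j. Then (m_1,m_2,m_3) is one of the following 22 triples, with the indicated value of α(A): (2,3,7), α = 84; (2,3,8), α = 48; (2,4,5), α = 40; (2,3,9), α = 36; (2,3,10), α = 30; (2,3,12), α = 24; (2,4,6), α = 24; (3,3,4), α = 24; (2,5,5), α = 20; (2,3,18), α = 18; (2,4,8), α = 16; (3,3,5), α = 15; (2,4,12), α = 12; (2,6,6), α = 12; (3,3,6), α = 12; (3,4,4), α = 12; (2,5,10), α = 10; (3,3,9), α = 9; (2,8,8), α = 8; (4,4,4), α = 8; (3,6,6), α = 6; (5,5,5), α = 5. -/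
/-!
Write `k_j = α / m_j`. Multiplying out `α · Θ = 2` gives `α = 2 + k₀ + k₁ + k₂`, and
`k₂ ≤ k₁ ≤ k₀` because the `m_j` increase. Hence `m₀ k₀ ≤ 2 + 3 k₀`, so `m₀ ≤ 5`; feeding in
`k₀ ≤ α / 2` bounds `m₁ ≤ 8`, and feeding in also `k₁ ≤ α / 3` bounds `m₂ ≤ 18`. The finitely
many remaining triples are checked one by one.
-/

theorem mul_card_eq_of_mul_theta_eq_two {ι : Type*} [Fintype ι] (m : ι → ℕ) (α : ℕ)
    (hdvd : ∀ j, m j ∣ α) (h : (α : ℚ) * (-2 + ∑ j, (1 - 1 / (m j : ℚ))) = 2) :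
    α * Fintype.card ι = 2 + 2 * α + ∑ j, α / m j := by
  have hsum : ((∑ j, α / m j : ℕ) : ℚ) = α * ∑ j, 1 / (m j : ℚ) := by
    rw [Nat.cast_sum, Finset.mul_sum]
    exact Finset.sum_congr rfl fun j _ => by rw [Nat.cast_div_charZero (hdvd j)]; ring
  rw [Finset.sum_sub_distrib, Finset.sum_const, Finset.card_univ, nsmul_one] at h
  apply Nat.cast_injective (R := ℚ)
  rw [Nat.cast_add, hsum]
  push_cast
  linarith

section Bounds

variable {a b c k₀ k₁ k₂ α : ℕ}

theorem le_of_mul_eq_mul_of_le (hab : a ≤ b) (hb : 0 < b) (h : a * k₀ = b * k₁) : k₁ ≤ k₀ :=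
  Nat.le_of_mul_le_mul_left (h ▸ Nat.mul_le_mul_right k₀ hab) hb

theorem quotients_antitone (h2a : 2 ≤ a) (hab : a ≤ b) (hbc : b ≤ c)
    (h₀ : α = a * k₀) (h₁ : α = b * k₁) (h₂ : α = c * k₂) (hsum : α = 2 + k₀ + k₁ + k₂) :
    1 ≤ k₂ ∧ k₂ ≤ k₁ ∧ k₁ ≤ k₀ := by
  refine ⟨Nat.one_le_iff_ne_zero.mpr ?_, le_of_mul_eq_mul_of_le hbc (by omega) (h₁ ▸ h₂),
    le_of_mul_eq_mul_of_le hab (by omega) (h₀ ▸ h₁)⟩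
  rintro rfl
  omega

theorem first_le_five (h2a : 2 ≤ a) (hab : a ≤ b) (hbc : b ≤ c)
    (h₀ : α = a * k₀) (h₁ : α = b * k₁) (h₂ : α = c * k₂) (hsum : α = 2 + k₀ + k₁ + k₂) :
    a ≤ 5 := by
  obtain ⟨h2, h21, h10⟩ := quotients_antitone h2a hab hbc h₀ h₁ h₂ hsum
  by_contra! ha
  linarith [Nat.mul_le_mul_right k₀ ha]

theorem second_le_eight (h2a : 2 ≤ a) (hab : a ≤ b) (hbc : b ≤ c)
    (h₀ : α = a * k₀) (h₁ : α = b * k₁) (h₂ : α = c * k₂) (hsum : α = 2 + k₀ + k₁ + k₂) :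
    b ≤ 8 := by
  obtain ⟨h2, h21, h10⟩ := quotients_antitone h2a hab hbc h₀ h₁ h₂ hsum
  by_contra! hb
  linarith [Nat.mul_le_mul_right k₀ h2a, Nat.mul_le_mul_right k₁ hb]

theorem three_le_second (h2a : 2 ≤ a) (hab : a ≤ b)
    (h₀ : α = a * k₀) (h₁ : α = b * k₁) (hsum : α = 2 + k₀ + k₁ + k₂) : 3 ≤ b := by
  by_contra! hb
  obtain ⟨rfl, rfl⟩ : a = 2 ∧ b = 2 := by omega
  omega

theorem third_le_eighteen (h2a : 2 ≤ a) (hab : a ≤ b) (hbc : b ≤ c)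
    (h₀ : α = a * k₀) (h₁ : α = b * k₁) (h₂ : α = c * k₂) (hsum : α = 2 + k₀ + k₁ + k₂) :
    c ≤ 18 := by
  obtain ⟨h2, h21, h10⟩ := quotients_antitone h2a hab hbc h₀ h₁ h₂ hsum
  by_contra! hc
  linarith [Nat.mul_le_mul_right k₀ h2a, Nat.mul_le_mul_right k₂ hc,
    Nat.mul_le_mul_right k₁ (three_le_second h2a hab h₀ h₁ hsum)]

end Bounds

theorem stmt_3_general (m : Fin 3 → ℕ) (hmono : Monotone m)
    (h2 : ∀ j, 2 ≤ m j)
    (Θ : ℚ) (hΘ : Θ = -2 + ∑ j, (1 - 1 / (m j : ℚ))) (hΘpos : 0 < Θ)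
    (α : ℕ) (hα : (α : ℚ) = 2 / Θ)
    (hdvd : ∀ j, m j ∣ α) :
    (m 0 = 2 ∧ m 1 = 3 ∧ m 2 = 7 ∧ α = 84) ∨
    (m 0 = 2 ∧ m 1 = 3 ∧ m 2 = 8 ∧ α = 48) ∨
    (m 0 = 2 ∧ m 1 = 4 ∧ m 2 = 5 ∧ α = 40) ∨
    (m 0 = 2 ∧ m 1 = 3 ∧ m 2 = 9 ∧ α = 36) ∨
    (m 0 = 2 ∧ m 1 = 3 ∧ m 2 = 10 ∧ α = 30) ∨
    (m 0 = 2 ∧ m 1 = 3 ∧ m 2 = 12 ∧ α = 24) ∨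
    (m 0 = 2 ∧ m 1 = 4 ∧ m 2 = 6 ∧ α = 24) ∨
    (m 0 = 3 ∧ m 1 = 3 ∧ m 2 = 4 ∧ α = 24) ∨
    (m 0 = 2 ∧ m 1 = 5 ∧ m 2 = 5 ∧ α = 20) ∨
    (m 0 = 2 ∧ m 1 = 3 ∧ m 2 = 18 ∧ α = 18) ∨
    (m 0 = 2 ∧ m 1 = 4 ∧ m 2 = 8 ∧ α = 16) ∨
    (m 0 = 3 ∧ m 1 = 3 ∧ m 2 = 5 ∧ α = 15) ∨
    (m 0 = 2 ∧ m 1 = 4 ∧ m 2 = 12 ∧ α = 12) ∨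
    (m 0 = 2 ∧ m 1 = 6 ∧ m 2 = 6 ∧ α = 12) ∨
    (m 0 = 3 ∧ m 1 = 3 ∧ m 2 = 6 ∧ α = 12) ∨
    (m 0 = 3 ∧ m 1 = 4 ∧ m 2 = 4 ∧ α = 12) ∨
    (m 0 = 2 ∧ m 1 = 5 ∧ m 2 = 10 ∧ α = 10) ∨
    (m 0 = 3 ∧ m 1 = 3 ∧ m 2 = 9 ∧ α = 9) ∨
    (m 0 = 2 ∧ m 1 = 8 ∧ m 2 = 8 ∧ α = 8) ∨
    (m 0 = 4 ∧ m 1 = 4 ∧ m 2 = 4 ∧ α = 8) ∨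
    (m 0 = 3 ∧ m 1 = 6 ∧ m 2 = 6 ∧ α = 6) ∨
    (m 0 = 5 ∧ m 1 = 5 ∧ m 2 = 5 ∧ α = 5) := by
  have hαΘ : (α : ℚ) * (-2 + ∑ j, (1 - 1 / (m j : ℚ))) = 2 := by
    rw [hα, ← hΘ, div_mul_cancel₀ _ hΘpos.ne']
  have hcard := mul_card_eq_of_mul_theta_eq_two m α hdvd hαΘ
  simp only [Fintype.card_fin, Fin.sum_univ_three] at hcard
  have hsum : α = 2 + α / m 0 + α / m 1 + α / m 2 := by omega
  have hk (j) : α = m j * (α / m j) := (Nat.mul_div_cancel' (hdvd j)).symm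
  have hk₀ := hk 0
  have hk₁ := hk 1
  have hk₂ := hk 2
  have h2₀ := h2 0
  have h01 := hmono (show (0 : Fin 3) ≤ 1 by decide)
  have h12 := hmono (show (1 : Fin 3) ≤ 2 by decide)
  have hm₀ := first_le_five h2₀ h01 h12 hk₀ hk₁ hk₂ hsum
  have hm₁ := second_le_eight h2₀ h01 h12 hk₀ hk₁ hk₂ hsum
  have hm₂ := third_le_eighteen h2₀ h01 h12 hk₀ hk₁ hk₂ hsum
  clear hαΘ hα hΘ hΘpos hk hcard hdvd hmono h2
  interval_cases m 0 <;> interval_cases m 1 <;> interval_cases m 2 <;>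
    first | (exfalso; omega) | (norm_num; omega)

/-- If `(m 0, m 1, m 2)` is a nondecreasing triple of integers `≥ 2` with
`Θ(A) = -2 + Σ_j (1 - 1/m j) > 0`, `α(A) = 2/Θ(A)` a positive integer, and
`m j ∣ α(A)` for all `j`, then the triple is one of the 22 listed ones, with
the indicated value of `α(A)`. -/
theorem stmt_3 (m : Fin 3 → ℕ) (hmono : Monotone m)
    (h2 : ∀ j, 2 ≤ m j)
    (Θ : ℚ) (hΘ : Θ = -2 + ∑ j, (1 - 1 / (m j : ℚ))) (hΘpos : 0 < Θ)
    (α : ℕ) (hαpos : 0 < α) (hα : (α : ℚ) = 2 / Θ)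
    (hdvd : ∀ j, m j ∣ α) :
    (m 0 = 2 ∧ m 1 = 3 ∧ m 2 = 7 ∧ α = 84) ∨
    (m 0 = 2 ∧ m 1 = 3 ∧ m 2 = 8 ∧ α = 48) ∨
    (m 0 = 2 ∧ m 1 = 4 ∧ m 2 = 5 ∧ α = 40) ∨
    (m 0 = 2 ∧ m 1 = 3 ∧ m 2 = 9 ∧ α = 36) ∨
    (m 0 = 2 ∧ m 1 = 3 ∧ m 2 = 10 ∧ α = 30) ∨
    (m 0 = 2 ∧ m 1 = 3 ∧ m 2 = 12 ∧ α = 24) ∨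
    (m 0 = 2 ∧ m 1 = 4 ∧ m 2 = 6 ∧ α = 24) ∨
    (m 0 = 3 ∧ m 1 = 3 ∧ m 2 = 4 ∧ α = 24) ∨
    (m 0 = 2 ∧ m 1 = 5 ∧ m 2 = 5 ∧ α = 20) ∨
    (m 0 = 2 ∧ m 1 = 3 ∧ m 2 = 18 ∧ α = 18) ∨
    (m 0 = 2 ∧ m 1 = 4 ∧ m 2 = 8 ∧ α = 16) ∨
    (m 0 = 3 ∧ m 1 = 3 ∧ m 2 = 5 ∧ α = 15) ∨
    (m 0 = 2 ∧ m 1 = 4 ∧ m 2 = 12 ∧ α = 12) ∨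
    (m 0 = 2 ∧ m 1 = 6 ∧ m 2 = 6 ∧ α = 12) ∨
    (m 0 = 3 ∧ m 1 = 3 ∧ m 2 = 6 ∧ α = 12) ∨
    (m 0 = 3 ∧ m 1 = 4 ∧ m 2 = 4 ∧ α = 12) ∨
    (m 0 = 2 ∧ m 1 = 5 ∧ m 2 = 10 ∧ α = 10) ∨
    (m 0 = 3 ∧ m 1 = 3 ∧ m 2 = 9 ∧ α = 9) ∨
    (m 0 = 2 ∧ m 1 = 8 ∧ m 2 = 8 ∧ α = 8) ∨
    (m 0 = 4 ∧ m 1 = 4 ∧ m 2 = 4 ∧ α = 8) ∨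
    (m 0 = 3 ∧ m 1 = 6 ∧ m 2 = 6 ∧ α = 6) ∨
    (m 0 = 5 ∧ m 1 = 5 ∧ m 2 = 5 ∧ α = 5) :=
  stmt_3_general m hmono h2 Θ hΘ hΘpos α hα hdvd
end

section
/- Let n be an integer with 4 ≤ n ≤ 5 and let a_1, …, a_n be integers with each a_i ≥ 2. Set N = ∏_{i=1}^n a_i and for each i set α_i = ∏_{j ≠ i} a_j. Suppose α_i ∈ S for every i, where S = {2,3,4,5,6,8,9,10,12,15,16,18,20,24,30,36,40,48,84}. Then N has at most 3 distinct prime divisors. -/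
/-!
Every prime of `N` divides some `a i`, hence every `α j` with `j ≠ i`. With `n ≥ 3` factors, any two
primes of `N` divide the same `α j`: pick `j` different from an index of each. So each prime of `N`
divides an element of `S`, all of which divide `5040 = 2⁴ 3² 5 7`, and no element of `S` is divisible
by `35`, so `N` cannot have all four of the primes `2, 3, 5, 7`.
-/

open Finset

theorem Finset.exists_prod_dvd_prod_erase {ι M : Type*} [Fintype ι] [DecidableEq ι]
    [CommMonoidWithZero M] [IsCancelMulZero M] [Subsingleton Mˣ] (a : ι → M) {s : Finset M}
    (hs : ∀ p ∈ s, Prime p) (hdvd : ∀ p ∈ s, p ∣ ∏ i, a i) (hcard : #s < Fintype.card ι) :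
    ∃ j, ∏ p ∈ s, p ∣ ∏ i ∈ univ.erase j, a i := by
  have : Nonempty ι := Fintype.card_pos_iff.1 ((Nat.zero_le _).trans_lt hcard)
  choose! f hf using fun p hp => (hs p hp).exists_mem_finset_dvd (hdvd p hp)
  obtain ⟨j, -, hj⟩ : ∃ j ∈ univ, j ∉ s.image f :=
    exists_mem_notMem_of_card_lt_card (card_image_le.trans_lt hcard)
  refine ⟨j, prod_primes_dvd _ hs fun p hp => (hf p hp).2.trans (dvd_prod_of_mem a ?_)⟩
  exact mem_erase.2 ⟨fun hpj => hj (hpj ▸ mem_image_of_mem f hp), mem_univ _⟩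

def alphaValues : Finset ℕ :=
  {2, 3, 4, 5, 6, 8, 9, 10, 12, 15, 16, 18, 20, 24, 30, 36, 40, 48, 84}

theorem dvd_5040_of_mem_alphaValues : ∀ m ∈ alphaValues, m ∣ 5040 := by
  decide

theorem not_35_dvd_of_mem_alphaValues : ∀ m ∈ alphaValues, ¬ 35 ∣ m := by
  decide

theorem card_le_three_of_pairs_dvd_alphaValues {P : Finset ℕ} (hP : ∀ p ∈ P, p.Prime)
    (hpairs : ∀ s ⊆ P, #s ≤ 2 → ∃ m ∈ alphaValues, ∏ p ∈ s, p ∣ m) : #P ≤ 3 := by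
  have hsub : P ⊆ {2, 3, 5, 7} := by
    intro p hp
    obtain ⟨m, hm, hpm⟩ := hpairs {p} (singleton_subset_iff.2 hp) (by simp)
    have hp5040 : p ∈ Nat.primeFactors 5040 :=
      Nat.mem_primeFactors.2
        ⟨hP p hp, (prod_singleton id p ▸ hpm).trans (dvd_5040_of_mem_alphaValues m hm), by norm_num⟩
    simpa [Nat.primeFactors, Nat.primeFactorsList_ofNat] using hp5040
  have h57 : ¬ {5, 7} ⊆ P := fun h => by
    obtain ⟨m, hm, h35⟩ := hpairs {5, 7} h (by decide)
    exact not_35_dvd_of_mem_alphaValues m hm h35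
  by_contra! hcard
  exact h57 (eq_of_subset_of_card_le hsub hcard ▸ by decide)

theorem stmt_6_general (n : ℕ) (hn4 : 4 ≤ n) (a : Fin n → ℕ)
    (N : ℕ) (hN : N = ∏ i, a i)
    (α : Fin n → ℕ) (hα : ∀ i, α i = ∏ j ∈ Finset.univ.erase i, a j)
    (hS : ∀ i, α i ∈ ({2, 3, 4, 5, 6, 8, 9, 10, 12, 15, 16, 18, 20, 24, 30, 36, 40, 48, 84} : Finset ℕ)) :
    N.primeFactors.card ≤ 3 := by
  refine card_le_three_of_pairs_dvd_alphaValues (fun p => Nat.prime_of_mem_primeFactors) ?_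
  intro s hs hcard
  obtain ⟨j, hj⟩ := exists_prod_dvd_prod_erase a
    (fun p hp => (Nat.prime_of_mem_primeFactors (hs hp)).prime)
    (fun p hp => hN ▸ Nat.dvd_of_mem_primeFactors (hs hp)) (by simp only [Fintype.card_fin]; omega)
  exact ⟨α j, hS j, hα j ▸ hj⟩

/-- If `4 ≤ n ≤ 5`, `a 1, …, a n ≥ 2` are integers, `N = ∏ a i`, and each
`α i = ∏_{j ≠ i} a j` lies in the list `S` of possible values of `α(A)`, then `N`
has at most `3` distinct prime divisors. -/
theorem stmt_6 (n : ℕ) (hn4 : 4 ≤ n) (hn5 : n ≤ 5) (a : Fin n → ℕ)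
    (ha : ∀ i, 2 ≤ a i)
    (N : ℕ) (hN : N = ∏ i, a i)
    (α : Fin n → ℕ) (hα : ∀ i, α i = ∏ j ∈ Finset.univ.erase i, a j)
    (hS : ∀ i, α i ∈ ({2, 3, 4, 5, 6, 8, 9, 10, 12, 15, 16, 18, 20, 24, 30, 36, 40, 48, 84} : Finset ℕ)) :
    N.primeFactors.card ≤ 3 :=
  stmt_6_general n hn4 a N hN α hα hS
end

section
/- Let n be an integer with 4 ≤ n ≤ 5 and let a_1, …, a_n be integers with each a_i ≥ 2. Set N = ∏_{i=1}^n a_i and for each i set α_i = ∏_{j ≠ i} a_j. Suppose α_i ∈ S for every i, where S = {2,3,4,5,6,8,9,10,12,15,16,18,20,24,30,36,40,48,84}, and suppose N has exactly 3 distinct prime divisors. Then n = 4 and either N = 60 and the multiset {α_1, α_2, α_3, α_4} equals {12, 20, 30, 30}, or N = 168 and the multiset {α_1, α_2, α_3, α_4} equals {8, 84, 84, 84}. -/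
/-!
Since `a i * α i = N` and every `α k` with `k ≠ i` contains the factor `a i` together with
`n - 2` further factors `≥ 2`, the bound `α k ≤ 84` gives `a i ≤ 84 / 2 ^ (n - 2)`, i.e.
`a i ≤ 21` for `n = 4` and `a i ≤ 10` for `n = 5`. In the remaining finite range an exhaustive
search shows that `N` divides `2 ^ 5 * 3 ^ 2` or `2 ^ 4 * 5`, so it has at most two prime factors,
except for the two configurations with `N = 60` and `N = 168`.
-/

open Finset

lemma le_84_of_mem_alphaValues : ∀ x ∈ alphaValues, x ≤ 84 := by decide

lemma card_primeFactors_le_two_of_dvd {m p q k l : ℕ} (hp : p.Prime) (hq : q.Prime)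
    (h : m ∣ p ^ k * q ^ l) : m.primeFactors.card ≤ 2 := by
  have hsub : (p ^ k * q ^ l).primeFactors ⊆ {p, q} := by
    intro r hr
    obtain ⟨hr, hdvd, -⟩ := Nat.mem_primeFactors.1 hr
    rcases hr.dvd_mul.1 hdvd with h | h
    · simp [(Nat.prime_dvd_prime_iff_eq hr hp).1 (hr.dvd_of_dvd_pow h)]
    · simp [(Nat.prime_dvd_prime_iff_eq hr hq).1 (hr.dvd_of_dvd_pow h)]
  calc m.primeFactors.card
      ≤ (p ^ k * q ^ l).primeFactors.card :=
        card_le_card (Nat.primeFactors_mono h (by positivity [hp.pos, hq.pos]))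
    _ ≤ ({p, q} : Finset ℕ).card := card_le_card hsub
    _ ≤ 2 := card_le_two

section ProdErase

variable {ι : Type*} [Fintype ι] [DecidableEq ι] {a : ι → ℕ}

lemma mul_two_pow_le_prod_erase (ha : ∀ j, 2 ≤ a j) {i k : ι} (hik : i ≠ k) :
    a i * 2 ^ (Fintype.card ι - 2) ≤ ∏ j ∈ univ.erase k, a j := by
  have hi : i ∈ univ.erase k := mem_erase.2 ⟨hik, mem_univ i⟩
  rw [← mul_prod_erase _ _ hi]
  gcongr
  calc 2 ^ (Fintype.card ι - 2) = 2 ^ ((univ.erase k).erase i).card := by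
        rw [card_erase_of_mem hi, card_erase_of_mem (mem_univ k), card_univ]; rfl
    _ ≤ _ := pow_card_le_prod _ _ _ fun j _ => ha j

lemma mul_two_pow_le_of_prod_erase_le (ha : ∀ j, 2 ≤ a j) (hcard : 1 < Fintype.card ι) {M : ℕ}
    (hM : ∀ k, ∏ j ∈ univ.erase k, a j ≤ M) (i : ι) : a i * 2 ^ (Fintype.card ι - 2) ≤ M := by
  obtain ⟨k, hki⟩ := Fintype.exists_ne_of_one_lt_card hcard i
  exact (mul_two_pow_le_prod_erase ha hki.symm).trans (hM k)

end ProdErase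

-- The first factor is quantified last so that `b * c * d ∈ alphaValues` prunes the search.
theorem alphaValues_four_factors : ∀ b ∈ List.range' 2 20, ∀ c ∈ List.range' 2 20,
    ∀ d ∈ List.range' 2 20, b * c * d ∈ alphaValues → ∀ a ∈ List.range' 2 20,
    a * c * d ∈ alphaValues → a * b * d ∈ alphaValues → a * b * c ∈ alphaValues →
    (a * b * c * d ∣ 2 ^ 5 * 3 ^ 2 ∨ a * b * c * d ∣ 2 ^ 4 * 5) ∨
    (a * b * c * d = 60 ∧
      ({b * c * d, a * c * d, a * b * d, a * b * c} : Multiset ℕ) = {12, 20, 30, 30}) ∨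
    (a * b * c * d = 168 ∧
      ({b * c * d, a * c * d, a * b * d, a * b * c} : Multiset ℕ) = {8, 84, 84, 84}) := by
  decide +kernel

theorem alphaValues_five_factors : ∀ b ∈ List.range' 2 9, ∀ c ∈ List.range' 2 9,
    ∀ d ∈ List.range' 2 9, ∀ e ∈ List.range' 2 9, b * c * d * e ∈ alphaValues →
    ∀ a ∈ List.range' 2 9, a * c * d * e ∈ alphaValues → a * b * d * e ∈ alphaValues →
    a * b * c * e ∈ alphaValues → a * b * c * d ∈ alphaValues →
    a * b * c * d * e ∣ 2 ^ 5 * 3 ^ 2 ∨ a * b * c * d * e ∣ 2 ^ 4 * 5 := by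
  decide +kernel

theorem fin_four_classification (a : Fin 4 → ℕ) (ha : ∀ i, 2 ≤ a i)
    (hS : ∀ i, ∏ j ∈ univ.erase i, a j ∈ alphaValues) :
    (∏ i, a i).primeFactors.card ≤ 2 ∨
    (∏ i, a i = 60 ∧ univ.val.map (fun i ↦ ∏ j ∈ univ.erase i, a j) = {12, 20, 30, 30}) ∨
    (∏ i, a i = 168 ∧ univ.val.map (fun i ↦ ∏ j ∈ univ.erase i, a j) = {8, 84, 84, 84}) := by
  have hrange (i : Fin 4) : a i ∈ List.range' 2 20 := by
    have := mul_two_pow_le_of_prod_erase_le ha (by decide) (fun k ↦ le_84_of_mem_alphaValues _ (hS k)) i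
    simp only [Fintype.card_fin, List.mem_range'_1] at this ⊢
    have := ha i
    omega
  have hα : (fun i ↦ ∏ j ∈ univ.erase i, a j) =
      ![a 1 * a 2 * a 3, a 0 * a 2 * a 3, a 0 * a 1 * a 3, a 0 * a 1 * a 2] := by
    funext i
    fin_cases i <;> simp [← filter_ne', prod_filter, Fin.prod_univ_four]
  replace hS (i : Fin 4) := congrFun hα i ▸ hS i
  rw [hα, Fin.prod_univ_four]
  rcases alphaValues_four_factors _ (hrange 1) _ (hrange 2) _ (hrange 3) (hS 0) _ (hrange 0)
    (hS 1) (hS 2) (hS 3) with (h | h) | h60 | h168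
  · exact .inl (card_primeFactors_le_two_of_dvd Nat.prime_two Nat.prime_three h)
  · exact .inl (card_primeFactors_le_two_of_dvd (l := 1) Nat.prime_two Nat.prime_five h)
  · exact .inr (.inl h60)
  · exact .inr (.inr h168)

theorem fin_five_card_primeFactors_le_two (a : Fin 5 → ℕ) (ha : ∀ i, 2 ≤ a i)
    (hS : ∀ i, ∏ j ∈ univ.erase i, a j ∈ alphaValues) : (∏ i, a i).primeFactors.card ≤ 2 := by
  have hrange (i : Fin 5) : a i ∈ List.range' 2 9 := by
    have := mul_two_pow_le_of_prod_erase_le ha (by decide) (fun k ↦ le_84_of_mem_alphaValues _ (hS k)) i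
    simp only [Fintype.card_fin, List.mem_range'_1] at this ⊢
    have := ha i
    omega
  have hα : (fun i ↦ ∏ j ∈ univ.erase i, a j) = ![a 1 * a 2 * a 3 * a 4, a 0 * a 2 * a 3 * a 4,
      a 0 * a 1 * a 3 * a 4, a 0 * a 1 * a 2 * a 4, a 0 * a 1 * a 2 * a 3] := by
    funext i
    fin_cases i <;> simp [← filter_ne', prod_filter, Fin.prod_univ_five]
  replace hS (i : Fin 5) := congrFun hα i ▸ hS i
  rw [Fin.prod_univ_five]
  rcases alphaValues_five_factors _ (hrange 1) _ (hrange 2) _ (hrange 3) _ (hrange 4) (hS 0) _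
    (hrange 0) (hS 1) (hS 2) (hS 3) (hS 4) with h | h
  · exact card_primeFactors_le_two_of_dvd Nat.prime_two Nat.prime_three h
  · exact card_primeFactors_le_two_of_dvd (l := 1) Nat.prime_two Nat.prime_five h

/-- If `4 ≤ n ≤ 5`, `a 1, …, a n ≥ 2` are integers, `N = ∏ a i`, each
`α i = ∏_{j ≠ i} a j` lies in the list `S`, and `N` has exactly `3` distinct prime
divisors, then `n = 4` and either `N = 60` with `{α i} = {12, 20, 30, 30}` as a
multiset, or `N = 168` with `{α i} = {8, 84, 84, 84}` as a multiset. -/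
theorem stmt_7 (n : ℕ) (hn4 : 4 ≤ n) (hn5 : n ≤ 5) (a : Fin n → ℕ)
    (ha : ∀ i, 2 ≤ a i)
    (N : ℕ) (hN : N = ∏ i, a i)
    (α : Fin n → ℕ) (hα : ∀ i, α i = ∏ j ∈ Finset.univ.erase i, a j)
    (hS : ∀ i, α i ∈ ({2, 3, 4, 5, 6, 8, 9, 10, 12, 15, 16, 18, 20, 24, 30, 36, 40, 48, 84} : Finset ℕ))
    (h3 : N.primeFactors.card = 3) :
    n = 4 ∧
      ((N = 60 ∧ Multiset.map α Finset.univ.val = ({12, 20, 30, 30} : Multiset ℕ)) ∨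
       (N = 168 ∧ Multiset.map α Finset.univ.val = ({8, 84, 84, 84} : Multiset ℕ))) := by
  obtain rfl : α = fun i ↦ ∏ j ∈ univ.erase i, a j := funext hα
  subst hN
  obtain rfl | rfl : n = 4 ∨ n = 5 := by omega
  · rcases fin_four_classification a ha hS with hfew | h60 | h168
    · omega
    · exact ⟨rfl, .inl h60⟩
    · exact ⟨rfl, .inr h168⟩
  · have := fin_five_card_primeFactors_le_two a ha hS
    omega
end

section
/- Let n be an integer with 4 ≤ n ≤ 5 and let a_1, …, a_n be integers with each a_i ≥ 2. Set N = ∏_{i=1}^n a_i and for each i set α_i = ∏_{j ≠ i} a_j. Suppose α_i ∈ S for every i, where S = {2,3,4,5,6,8,9,10,12,15,16,18,20,24,30,36,40,48,84}, and suppose N is a power of a single prime. Then either N = 16 and n = 4, or N = 32. -/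
/-!
Since `N = p ^ k` and every `a i ≥ 2`, each `a i` is divisible by `p`, so each `α i` is a power
of `p` with exponent at least `n - 1 ≥ 3`. The only such prime powers in `S` are `8` and `16`,
so `p = 2` and `α i ≤ 16`. Multiplying over `i` gives `N ^ (n - 1) = ∏ α i ≤ 16 ^ n`, while
`N ≥ 2 ^ n`; for `N = 2 ^ k` this forces `k * (n - 1) ≤ 4 * n` and `n ≤ k`, leaving only
`(n, k) = (4, 4)`, `(4, 5)` and `(5, 5)`.
-/

theorem Nat.Prime.dvd_of_dvd_pow_of_ne_one {p m k : ℕ} (hp : p.Prime) (hm : m ∣ p ^ k)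
    (hm1 : m ≠ 1) : p ∣ m := by
  obtain ⟨q, hq, hqm⟩ := Nat.exists_prime_and_dvd hm1
  rwa [← (Nat.prime_dvd_prime_iff_eq hq hp).mp (hq.dvd_of_dvd_pow (hqm.trans hm))]

namespace Finset

theorem pow_card_dvd_prod {ι M : Type*} [CommMonoid M] (s : Finset ι) (f : ι → M) (m : M)
    (h : ∀ i ∈ s, m ∣ f i) : m ^ s.card ∣ ∏ i ∈ s, f i := by
  simpa only [prod_const] using prod_dvd_prod_of_dvd _ _ h

theorem prod_prod_erase_eq_pow {ι M : Type*} [Fintype ι] [DecidableEq ι] [CommMonoid M]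
    (f : ι → M) : ∏ i, ∏ j ∈ univ.erase i, f j = (∏ i, f i) ^ (Fintype.card ι - 1) := by
  rw [prod_comm' (t' := univ) (s' := fun j => univ.erase j) (by simp [and_comm, eq_comm]),
    ← prod_pow]
  simp [prod_const, card_erase_of_mem]

end Finset

def genusZeroAlphaValues : Finset ℕ :=
  {2, 3, 4, 5, 6, 8, 9, 10, 12, 15, 16, 18, 20, 24, 30, 36, 40, 48, 84}

theorem eq_two_and_pow_le_sixteen_of_pow_mem_genusZeroAlphaValues {p m : ℕ} (hp : p.Prime)
    (hm : 3 ≤ m) (hS : p ^ m ∈ genusZeroAlphaValues) :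
    p = 2 ∧ p ^ m ≤ 16 := by
  have h84 : p ^ m ≤ 84 := by
    simp only [genusZeroAlphaValues, Finset.mem_insert, Finset.mem_singleton] at hS
    omega
  have hp4 : p ≤ 4 := by
    by_contra! h
    have : 5 ^ 3 ≤ p ^ m := (Nat.pow_le_pow_left h 3).trans (Nat.pow_le_pow_right hp.pos hm)
    omega
  have hm6 : m ≤ 6 := by
    by_contra! h
    have : 2 ^ 7 ≤ p ^ m :=
      (Nat.pow_le_pow_left hp.two_le 7).trans (Nat.pow_le_pow_right hp.pos h)
    omega
  interval_cases p <;> interval_cases m <;> simp_all +decide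

theorem eq_four_or_eq_five_of_mul_pred_le {n k : ℕ} (hn : 4 ≤ n) (hk : n ≤ k)
    (h : k * (n - 1) ≤ 4 * n) :
    (k = 4 ∧ n = 4) ∨ k = 5 := by
  have hn5 : n ≤ 5 := by
    obtain ⟨n, rfl⟩ : ∃ n', n = n' + 1 := ⟨n - 1, by omega⟩
    simp only [Nat.add_sub_cancel] at h
    nlinarith
  interval_cases n <;> omega

theorem stmt_9_general (n : ℕ) (hn4 : 4 ≤ n) (a : Fin n → ℕ)
    (ha : ∀ i, 2 ≤ a i)
    (N : ℕ) (hN : N = ∏ i, a i)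
    (α : Fin n → ℕ) (hα : ∀ i, α i = ∏ j ∈ Finset.univ.erase i, a j)
    (hS : ∀ i, α i ∈ ({2, 3, 4, 5, 6, 8, 9, 10, 12, 15, 16, 18, 20, 24, 30, 36, 40, 48, 84} : Finset ℕ))
    (hpp : ∃ (p k : ℕ), p.Prime ∧ N = p ^ k) :
    (N = 16 ∧ n = 4) ∨ N = 32 := by
  obtain ⟨p, k, hp, rfl⟩ := hpp
  obtain rfl : α = fun i => ∏ j ∈ Finset.univ.erase i, a j := funext hα
  have hα_dvd : ∀ i, ∏ j ∈ Finset.univ.erase i, a j ∣ p ^ k := fun i =>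
    hN ▸ Finset.prod_dvd_prod_of_subset _ _ _ (Finset.erase_subset _ _)
  have hp_dvd : ∀ i, p ∣ a i := fun i =>
    hp.dvd_of_dvd_pow_of_ne_one (hN ▸ Finset.dvd_prod_of_mem a (Finset.mem_univ i))
      (by have := ha i; omega)
  have hp_two_and_le : ∀ i, p = 2 ∧ ∏ j ∈ Finset.univ.erase i, a j ≤ 16 := by
    intro i
    obtain ⟨m, -, hm⟩ := (Nat.dvd_prime_pow hp).mp (hα_dvd i)
    have hpm : p ^ (n - 1) ∣ p ^ m := by
      simpa [← hm, Finset.card_erase_of_mem] using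
        Finset.pow_card_dvd_prod (Finset.univ.erase i) a p fun j _ => hp_dvd j
    have h3m : 3 ≤ m := by
      have := (Nat.pow_dvd_pow_iff_le_right hp.one_lt).mp hpm
      omega
    exact hm ▸ eq_two_and_pow_le_sixteen_of_pow_mem_genusZeroAlphaValues hp h3m (hm ▸ hS i)
  obtain rfl : p = 2 := (hp_two_and_le ⟨0, by omega⟩).1
  have h_upper : k * (n - 1) ≤ 4 * n := by
    rw [← Nat.pow_le_pow_iff_right one_lt_two, pow_mul, pow_mul, hN]
    have h := Finset.prod_le_pow_card Finset.univ _ 16 fun i _ => (hp_two_and_le i).2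
    rw [Finset.prod_prod_erase_eq_pow, Fintype.card_fin] at h
    simpa using h
  have h_lower : n ≤ k := by
    rw [← Nat.pow_le_pow_iff_right one_lt_two, hN]
    simpa using Finset.pow_card_le_prod Finset.univ a 2 fun i _ => ha i
  rcases eq_four_or_eq_five_of_mul_pred_le hn4 h_lower h_upper with ⟨rfl, rfl⟩ | rfl <;> simp

/-- If `4 ≤ n ≤ 5`, `a 1, …, a n ≥ 2` are integers, `N = ∏ a i`, each
`α i = ∏_{j ≠ i} a j` lies in the list `S`, and `N` is a power of a single prime,
then either `N = 16` and `n = 4`, or `N = 32`. -/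
theorem stmt_9 (n : ℕ) (hn4 : 4 ≤ n) (hn5 : n ≤ 5) (a : Fin n → ℕ)
    (ha : ∀ i, 2 ≤ a i)
    (N : ℕ) (hN : N = ∏ i, a i)
    (α : Fin n → ℕ) (hα : ∀ i, α i = ∏ j ∈ Finset.univ.erase i, a j)
    (hS : ∀ i, α i ∈ ({2, 3, 4, 5, 6, 8, 9, 10, 12, 15, 16, 18, 20, 24, 30, 36, 40, 48, 84} : Finset ℕ))
    (hpp : ∃ (p k : ℕ), p.Prime ∧ N = p ^ k) :
    (N = 16 ∧ n = 4) ∨ N = 32 :=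
  stmt_9_general n hn4 a ha N hN α hα hS hpp
end

section
/- No group of order 36 is generated by two elements a and b such that a has order 2, b has order 3, and a·b has order 18. -/
/-! The cyclic subgroup `⟨a * b⟩` has index 2, so it is normal and contains every element of
odd order, in particular `b`; then it also contains `a`, hence is all of `G`, which is absurd. -/

theorem Subgroup.mem_of_coprime_index_orderOf {G : Type*} [Group G] (H : Subgroup G) [H.Normal]
    {g : G} (h : H.index.Coprime (orderOf g)) : g ∈ H := by
  obtain ⟨m, hm⟩ := exists_pow_eq_self_of_coprime h
  exact hm ▸ pow_mem (H.pow_index_mem g) m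

/-- No group of order 36 is generated by two elements `a` and `b` such that `a` has
order 2, `b` has order 3, and `a * b` has order 18. -/
theorem stmt_11 (G : Type*) [Group G] (hG : Nat.card G = 36) :
    ¬ ∃ a b : G, Subgroup.closure ({a, b} : Set G) = ⊤ ∧
      orderOf a = 2 ∧ orderOf b = 3 ∧ orderOf (a * b) = 18 := by
  rintro ⟨a, b, hgen, -, hb, hab⟩
  set H := Subgroup.zpowers (a * b)
  have hindex : H.index = 2 := by
    have := H.card_mul_index
    rw [Nat.card_zpowers, hab, hG] at this
    omega
  have : H.Normal := Subgroup.normal_of_index_eq_two hindex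
  have hbH : b ∈ H := H.mem_of_coprime_index_orderOf (by rw [hindex, hb]; norm_num)
  have haH : a ∈ H := by
    simpa using H.mul_mem (Subgroup.mem_zpowers (a * b)) (H.inv_mem hbH)
  have hH : H = ⊤ := top_le_iff.mp <| hgen ▸ (Subgroup.closure_le H).mpr <| by
    rintro x (rfl | rfl) <;> assumption
  rw [hH, Subgroup.index_top] at hindex
  omega
end

section
/- There is no group G of order 60 admitting both of the following: (i) elements a, b ∈ G with ⟨a,b⟩ = G, a of order 2, b of order 3, and a·b of order 10; and (ii) elements c, d ∈ G with ⟨c,d⟩ = G, c of order 2, d of order 5, and c·d of order 5. -/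
/-!
The element `(a * b) ^ 2` has order 5, so it generates a Sylow 5-subgroup `P`, and the Sylow
theorems leave two possibilities for the number of Sylow 5-subgroups. If it is 1, then `P` is
normal, so it contains the 5-elements `d` and `c * d`, hence `c`, and is all of `G`. If it is 6,
the normalizer of `P` has order 10, so it is the cyclic group generated by `a * b` and centralizes
`P`. Burnside's transfer theorem then gives a normal complement of index 5, which contains `a`
and `b` because their orders are prime to 5, and is therefore all of `G`.
-/

open Subgroup

namespace Subgroup

variable {G : Type*} [Group G]

theorem mem_of_coprime_orderOf_index {N : Subgroup G} [N.Normal] {x : G}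
    (hx : (orderOf x).Coprime N.index) : x ∈ N := by
  rw [← QuotientGroup.eq_one_iff, ← orderOf_eq_one_iff]
  exact Nat.eq_one_of_dvd_coprimes hx (orderOf_map_dvd (QuotientGroup.mk' N) x)
    (N.index_eq_card ▸ _root_.orderOf_dvd_natCard _)

theorem eq_top_of_closure_pair_eq_top {N : Subgroup G} {x y : G}
    (hxy : closure {x, y} = ⊤) (hx : x ∈ N) (hy : y ∈ N) : N = ⊤ :=
  top_le_iff.mp <| hxy ▸
    (closure_le N).mpr (Set.insert_subset hx (Set.singleton_subset_iff.mpr hy))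

theorem normalizer_le_centralizer_of_le_zpowers [Finite G] {H : Subgroup G} {g : G}
    (hH : H ≤ zpowers g) (hcard : Nat.card (normalizer (H : Set G)) ≤ orderOf g) :
    normalizer (H : Set G) ≤ centralizer (H : Set G) := by
  have hC : zpowers g ≤ centralizer (H : Set G) :=
    (le_centralizer (H := zpowers g)).trans (centralizer_le hH)
  have hN : zpowers g = normalizer (H : Set G) :=
    eq_of_le_of_card_ge (hC.trans (centralizer_le_normalizer _)) (by rwa [Nat.card_zpowers])
  exact hN ▸ hC

end Subgroup

namespace Sylow

variable {G : Type*} [Group G] [Finite G] {p : ℕ} [hp : Fact p.Prime]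

theorem coprime_index (P : Sylow p G) : p.Coprime P.index :=
  (Nat.Prime.coprime_iff_not_dvd hp.out).mpr P.not_dvd_index

theorem eq_top_of_normal_of_closure_pair_eq_top (P : Sylow p G) [(P : Subgroup G).Normal]
    {c d : G} (hgen : closure {c, d} = ⊤) (hd : orderOf d = p) (hcd : orderOf (c * d) = p) :
    (P : Subgroup G) = ⊤ := by
  have hdP : d ∈ P := mem_of_coprime_orderOf_index (hd ▸ P.coprime_index)
  have hcdP : c * d ∈ P := mem_of_coprime_orderOf_index (hcd ▸ P.coprime_index)
  have hcP : c ∈ P := by simpa using mul_mem hcdP (inv_mem hdP)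
  exact Subgroup.eq_top_of_closure_pair_eq_top hgen hcP hdP

theorem eq_bot_of_closure_pair_eq_top_of_coprime (P : Sylow p G)
    (hNC : normalizer (P : Set G) ≤ centralizer (P : Set G))
    {a b : G} (hgen : closure {a, b} = ⊤) (ha : (orderOf a).Coprime p)
    (hb : (orderOf b).Coprime p) : (P : Subgroup G) = ⊥ := by
  set K := (MonoidHom.transferSylow P hNC).ker
  have hK : K.index = Nat.card P :=
    (MonoidHom.ker_transferSylow_isComplement' P hNC).symm.index_eq_card
  obtain ⟨n, hn⟩ := P.isPGroup'.exists_card_eq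
  have hcop {x : G} (hx : (orderOf x).Coprime p) : x ∈ K :=
    mem_of_coprime_orderOf_index (hK ▸ hn ▸ hx.pow_right n)
  have hKtop := Subgroup.eq_top_of_closure_pair_eq_top hgen (hcop ha) (hcop hb)
  rwa [hKtop, index_top, eq_comm, card_eq_one] at hK

end Sylow

section SixtyFive

variable {G : Type*} [Group G] [Finite G] [Fact (Nat.Prime 5)]

theorem card_sylow_five_eq_one_or_six (hG : Nat.card G = 60) (P : Sylow 5 G)
    (hP : Nat.card P = 5) : Nat.card (Sylow 5 G) = 1 ∨ Nat.card (Sylow 5 G) = 6 := by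
  have hindex : P.index = 12 := by
    have := P.card_mul_index
    rw [hP, hG] at this
    omega
  have hdvd : Nat.card (Sylow 5 G) ∣ 12 := hindex ▸ P.card_dvd_index
  have hmod : Nat.card (Sylow 5 G) % 5 = 1 % 5 := card_sylow_modEq_one 5 G
  have hle : Nat.card (Sylow 5 G) ≤ 12 := Nat.le_of_dvd (by norm_num) hdvd
  interval_cases Nat.card (Sylow 5 G) <;> omega

theorem card_normalizer_sylow_five_eq_ten (hG : Nat.card G = 60)
    (h6 : Nat.card (Sylow 5 G) = 6) (P : Sylow 5 G) : Nat.card (normalizer (P : Set G)) = 10 := by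
  have := (normalizer (P : Set G)).card_mul_index
  rw [← P.card_eq_index_normalizer, h6, hG] at this
  omega

end SixtyFive

/-- There is no group of order 60 having both a generating pair `(a, b)` with
`a` of order 2, `b` of order 3 and `a * b` of order 10, and a generating pair
`(c, d)` with `c` of order 2, `d` of order 5 and `c * d` of order 5. -/
theorem stmt_12 (G : Type*) [Group G] (hG : Nat.card G = 60) :
    ¬ ((∃ a b : G, Subgroup.closure ({a, b} : Set G) = ⊤ ∧
          orderOf a = 2 ∧ orderOf b = 3 ∧ orderOf (a * b) = 10) ∧
       (∃ c d : G, Subgroup.closure ({c, d} : Set G) = ⊤ ∧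
          orderOf c = 2 ∧ orderOf d = 5 ∧ orderOf (c * d) = 5)) := by
  rintro ⟨⟨a, b, hab, ha, hb, hab10⟩, ⟨c, d, hcd, -, hd, hcd5⟩⟩
  have : Finite G := Nat.finite_of_card_ne_zero (by omega)
  have : Fact (Nat.Prime 5) := ⟨Nat.prime_five⟩
  have hcard : Nat.card (zpowers ((a * b) ^ 2)) = 5 := by
    rw [Nat.card_zpowers, orderOf_pow, hab10]
    rfl
  have hmult : (Nat.card G).factorization 5 = 1 := by
    rw [hG, show 60 = 5 * 12 by rfl, Nat.factorization_mul_apply_of_coprime (by norm_num),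
      Nat.prime_five.factorization_self, Nat.factorization_eq_zero_of_not_dvd (by norm_num)]
  let P : Sylow 5 G := Sylow.ofCard _ (by rw [hcard, hmult, pow_one])
  have hP : Nat.card P = 5 := hcard
  rcases card_sylow_five_eq_one_or_six hG P hP with h1 | h6
  · have : Subsingleton (Sylow 5 G) := (Nat.card_eq_one_iff_unique.mp h1).1
    have := P.normal_of_subsingleton
    rw [P.eq_top_of_normal_of_closure_pair_eq_top hcd hd hcd5, card_top, hG] at hP
    omega
  · have hNC := normalizer_le_centralizer_of_le_zpowers
      (zpowers_le.mpr (pow_mem (mem_zpowers (a * b)) 2))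
      ((card_normalizer_sylow_five_eq_ten hG h6 P).trans hab10.symm).le
    rw [P.eq_bot_of_closure_pair_eq_top_of_coprime hNC hab (by rw [ha]; norm_num)
      (by rw [hb]; norm_num), card_bot] at hP
    omega
end

section
/- In the group PSL(2,7), i.e. the quotient of the special linear group SL(2, ℤ/7ℤ) of 2×2 matrices of determinant 1 over the field with 7 elements by its center, any two elements of order 2 are conjugate; that is, the elements of order 2 form a single conjugacy class. -/
/-!
By Cayley–Hamilton, `A ^ 2 = tr A • A - 1` for `A ∈ SL(2, K)`, so a non-central `A` whose square
is central has trace zero and satisfies `A ^ 2 = -1`. For such `A` and any vector `v`, the matrix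
`C` with columns `v, A v` satisfies `C S = A C` with `S = !![0, -1; 1, 0]`. Replacing `v` by
`(a + b A) v` multiplies `det C` by `det (a + b A) = a ^ 2 + b ^ 2`, and over a finite field every
element is a sum of two squares, so `v` can be chosen with `det C = 1`. Hence every element of
order 2 of `PSL(2, K)` is conjugate to the image of `S`.
-/

open Matrix
open scoped MatrixGroups

open Polynomial in
theorem FiniteField.exists_sq_add_sq {K : Type*} [Field K] [Fintype K] (x : K) :
    ∃ a b : K, a ^ 2 + b ^ 2 = x := by
  by_cases hK : ringChar K = 2
  · obtain ⟨a, rfl⟩ := isSquare_of_char_two hK x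
    exact ⟨a, 0, by ring⟩
  · obtain ⟨a, b, hab⟩ := exists_root_sum_quadratic (f := X ^ 2) (g := X ^ 2 - C x)
      (degree_X_pow 2) (degree_X_pow_sub_C two_pos x) (odd_card_of_char_ne_two hK)
    refine ⟨a, b, ?_⟩
    simpa [← add_sub_assoc, sub_eq_zero] using hab

namespace Matrix

variable {R : Type*} [CommRing R]

theorem sq_fin_two_eq_trace_smul_sub_det_smul (A : Matrix (Fin 2) (Fin 2) R) :
    A ^ 2 = A.trace • A - A.det • 1 := by
  rw [A.eta_fin_two, sq]
  ext i j
  fin_cases i <;> fin_cases j <;> simp [trace_fin_two, det_fin_two] <;> ring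

theorem det_smul_one_add_smul_fin_two {A : Matrix (Fin 2) (Fin 2) R} (htr : A.trace = 0)
    (hdet : A.det = 1) (a b : R) : (a • 1 + b • A).det = a ^ 2 + b ^ 2 := by
  rw [trace_fin_two] at htr
  rw [det_fin_two] at hdet ⊢
  simp only [add_apply, smul_apply, smul_eq_mul, one_apply_eq, one_apply_ne zero_ne_one,
    one_apply_ne one_ne_zero, mul_one, mul_zero, zero_add]
  linear_combination (a * b) * htr + b ^ 2 * hdet

def krylovMatrix (A : Matrix (Fin 2) (Fin 2) R) (v : Fin 2 → R) : Matrix (Fin 2) (Fin 2) R :=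
  (of ![v, A *ᵥ v])ᵀ

theorem transpose_mul_krylovMatrix (A B : Matrix (Fin 2) (Fin 2) R) (v : Fin 2 → R) :
    (B * krylovMatrix A v)ᵀ = of ![B *ᵥ v, B *ᵥ A *ᵥ v] := by
  simp only [krylovMatrix, transpose_mul, transpose_transpose, cons_mul, vecMul_transpose,
    empty_mul]
  rfl

theorem krylovMatrix_mulVec {A B : Matrix (Fin 2) (Fin 2) R} (h : Commute A B) (v : Fin 2 → R) :
    krylovMatrix A (B *ᵥ v) = B * krylovMatrix A v := by
  rw [← transpose_inj, transpose_mul_krylovMatrix, krylovMatrix, transpose_transpose,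
    mulVec_mulVec, mulVec_mulVec, h.eq]

theorem krylovMatrix_mul_eq_mul_krylovMatrix {A : Matrix (Fin 2) (Fin 2) R} (hA : A ^ 2 = -1)
    (v : Fin 2 → R) : krylovMatrix A v * !![0, -1; 1, 0] = A * krylovMatrix A v := by
  rw [← transpose_inj, transpose_mul_krylovMatrix, mulVec_mulVec, ← sq, hA, transpose_mul]
  ext i j
  fin_cases i <;> fin_cases j <;> simp [krylovMatrix, mul_apply]

theorem eq_scalar_of_forall_det_krylovMatrix_eq_zero {A : Matrix (Fin 2) (Fin 2) R}
    (h : ∀ v, (krylovMatrix A v).det = 0) : A = scalar (Fin 2) (A 0 0) := by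
  have h₀ := h ![1, 0]
  have h₁ := h ![0, 1]
  have h₂ := h ![1, 1]
  ext i j
  fin_cases i <;> fin_cases j <;> simp [krylovMatrix, det_fin_two] at h₀ h₁ h₂ ⊢ <;> grind

end Matrix

namespace Matrix.SpecialLinearGroup

theorem mem_center_of_coe_eq_scalar {n : Type*} [Fintype n] [DecidableEq n] {R : Type*}
    [CommRing R] {A : SpecialLinearGroup n R} {c : R} (h : (A : Matrix n n R) = scalar n c) :
    A ∈ Subgroup.center (SpecialLinearGroup n R) :=
  Subgroup.mem_center_iff.mpr fun g => Subtype.ext <| by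
    rw [coe_mul, coe_mul, h]
    exact (scalar_commute c (fun _ => Commute.all _ _) (g : Matrix n n R)).symm

variable {K : Type*} [Field K]

theorem trace_eq_zero_of_sq_mem_center {A : SL(2, K)} (hsq : A ^ 2 ∈ Subgroup.center SL(2, K))
    (hA : A ∉ Subgroup.center SL(2, K)) : (A : Matrix (Fin 2) (Fin 2) K).trace = 0 := by
  set t := (A : Matrix (Fin 2) (Fin 2) K).trace
  by_contra ht
  obtain ⟨u, -, hu⟩ := mem_center_iff.mp hsq
  have hCH := sq_fin_two_eq_trace_smul_sub_det_smul (A : Matrix (Fin 2) (Fin 2) K)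
  rw [← coe_pow, ← hu, A.det_coe, one_smul, eq_sub_iff_add_eq, eq_comm,
    ← map_one (scalar (Fin 2)), ← map_add] at hCH
  refine hA (mem_center_of_coe_eq_scalar (c := t⁻¹ * (u + 1)) ?_)
  rw [← inv_smul_smul₀ ht (A : Matrix (Fin 2) (Fin 2) K), hCH, scalar_apply, scalar_apply,
    ← diagonal_smul]
  rfl

theorem isConj_S_of_trace_eq_zero [Fintype K] {A : SL(2, K)}
    (htr : (A : Matrix (Fin 2) (Fin 2) K).trace = 0) (hA : A ∉ Subgroup.center SL(2, K)) :
    IsConj (map (Int.castRingHom K) ModularGroup.S) A := by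
  set M := (A : Matrix (Fin 2) (Fin 2) K)
  have hsq : M ^ 2 = -1 := by
    rw [sq_fin_two_eq_trace_smul_sub_det_smul, htr, A.det_coe]
    simp only [zero_smul, one_smul, zero_sub]
  obtain ⟨v₀, hv₀⟩ : ∃ v, (krylovMatrix M v).det ≠ 0 := by
    by_contra! h
    exact hA (mem_center_of_coe_eq_scalar (eq_scalar_of_forall_det_krylovMatrix_eq_zero h))
  obtain ⟨a, b, hab⟩ := FiniteField.exists_sq_add_sq (krylovMatrix M v₀).det⁻¹
  have hB : Commute M (a • 1 + b • M) :=
    ((Commute.one_right M).smul_right a).add_right ((Commute.refl M).smul_right b)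
  let C : SL(2, K) := ⟨krylovMatrix M ((a • 1 + b • M) *ᵥ v₀), by
    rw [krylovMatrix_mulVec hB, det_mul, det_smul_one_add_smul_fin_two htr A.det_coe, hab,
      inv_mul_cancel₀ hv₀]⟩
  have hS : ((map (Int.castRingHom K) ModularGroup.S : SL(2, K)) : Matrix (Fin 2) (Fin 2) K) =
      !![0, -1; 1, 0] := by
    ext i j
    fin_cases i <;> fin_cases j <;> simp [ModularGroup.coe_S]
  refine isConj_iff.mpr ⟨C, mul_inv_eq_of_eq_mul (Subtype.ext ?_)⟩
  rw [coe_mul, coe_mul, hS]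
  exact krylovMatrix_mul_eq_mul_krylovMatrix hsq _

theorem isConj_S_of_orderOf_mk_eq_two [Fintype K] {A : SL(2, K)}
    (h : orderOf (A : SL(2, K) ⧸ Subgroup.center SL(2, K)) = 2) :
    IsConj (map (Int.castRingHom K) ModularGroup.S) A := by
  have hA : A ∉ Subgroup.center SL(2, K) := fun hA => by
    simp [(QuotientGroup.eq_one_iff A).mpr hA] at h
  have hsq : A ^ 2 ∈ Subgroup.center SL(2, K) := by
    rw [← QuotientGroup.eq_one_iff, QuotientGroup.mk_pow]
    exact orderOf_dvd_iff_pow_eq_one.mp (dvd_of_eq h)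
  exact isConj_S_of_trace_eq_zero (trace_eq_zero_of_sq_mem_center hsq hA) hA

theorem isConj_of_orderOf_eq_two [Fintype K] {a b : SL(2, K) ⧸ Subgroup.center SL(2, K)}
    (ha : orderOf a = 2) (hb : orderOf b = 2) : IsConj a b := by
  obtain ⟨A, rfl⟩ := QuotientGroup.mk_surjective a
  obtain ⟨B, rfl⟩ := QuotientGroup.mk_surjective b
  exact (QuotientGroup.mk' _).map_isConj
    ((isConj_S_of_orderOf_mk_eq_two ha).symm.trans (isConj_S_of_orderOf_mk_eq_two hb))

end Matrix.SpecialLinearGroup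

/-- In `PSL(2,7)`, the quotient of `SL(2, ℤ/7ℤ)` by its center, any two elements of
order 2 are conjugate. -/
theorem stmt_14
    (a b : Matrix.SpecialLinearGroup (Fin 2) (ZMod 7) ⧸
      Subgroup.center (Matrix.SpecialLinearGroup (Fin 2) (ZMod 7)))
    (ha : orderOf a = 2) (hb : orderOf b = 2) :
    IsConj a b :=
  haveI : Fact (Nat.Prime 7) := ⟨by norm_num⟩
  Matrix.SpecialLinearGroup.isConj_of_orderOf_eq_two ha hb
end

section
/- Let G be the dihedral group of order 24, with presentation ⟨x, y ∣ x^12 = y^2 = 1, y x y = x^{-1}⟩. Suppose h_1, h_2, h_3, h_4 ∈ G satisfy h_1 h_2 h_3 h_4 = 1 and generate G, and suppose that either three of the h_i have order 2 and the remaining one has order 3, or three of the h_i have order 2 and the remaining one has order 4. Then some h_i equals the central involution x^6. -/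
/-!
Reflections are exactly the elements of odd parity under the sign homomorphism `D_n → ℤˣ`,
so in a relation `h₀ h₁ h₂ h₃ = 1` the number of reflections is even. An element of order 3
or 4 is a rotation, and the only rotation of order 2 in `D_12` is `x^6`; if no `hᵢ` were `x^6`,
the three involutions would all be reflections, an odd number.
-/

open Finset

namespace DihedralGroup
variable {n : ℕ}

def sign : DihedralGroup n →* ℤˣ where
  toFun
    | r _ => 1
    | sr _ => -1
  map_one' := rfl
  map_mul' a b := by cases a <;> cases b <;> simp [r_mul_r, r_mul_sr, sr_mul_r, sr_mul_sr]

@[simp] lemma sign_r (i : ZMod n) : sign (r i) = 1 := rfl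
@[simp] lemma sign_sr (i : ZMod n) : sign (sr i) = -1 := rfl

lemma eq_half_of_orderOf_r_eq_two [NeZero n] {k : ZMod n} (hk : orderOf (r k) = 2) :
    k = ((n / 2 : ℕ) : ZMod n) := by
  have hsq : r k ^ 2 = 1 := hk ▸ pow_orderOf_eq_one _
  rw [r_pow, one_def] at hsq
  have hdvd : n ∣ k.val * 2 := by
    rw [← ZMod.natCast_eq_zero_iff]; push_cast [ZMod.natCast_val, ZMod.cast_id]; exact r.inj hsq
  have hk0 : k.val ≠ 0 := by
    rw [ZMod.val_ne_zero]; rintro rfl; simp [r_zero] at hk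
  have hlt := ZMod.val_lt k
  obtain ⟨c, hc⟩ := hdvd
  -- `0 < 2 k < 2 n` leaves only `2 k = n`
  obtain _ | _ | c := c
  · omega
  · rw [← ZMod.natCast_zmod_val k]; congr 1; omega
  · nlinarith

lemma sign_eq_neg_one_of_orderOf_eq_two [NeZero n] {g : DihedralGroup n} (hg : orderOf g = 2)
    (hne : g ≠ r (n / 2 : ℕ)) : sign g = -1 := by
  cases g with
  | r k => exact absurd (congrArg r (eq_half_of_orderOf_r_eq_two hg)) hne
  | sr k => rfl

lemma sign_eq_one_of_orderOf_ne_two {g : DihedralGroup n} (hg : orderOf g ≠ 2) : sign g = 1 := by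
  cases g with
  | r k => rfl
  | sr k => exact absurd (orderOf_sr k) hg

lemma even_card_sign_eq_neg_one {m : ℕ} {g : Fin m → DihedralGroup n}
    (hg : (List.ofFn g).prod = 1) : Even #{j | sign (g j) = -1} := by
  have hsign : ∏ j, sign (g j) = 1 := by
    simpa only [map_list_prod, List.map_ofFn, List.prod_ofFn, Function.comp_apply, map_one]
      using congrArg sign hg
  rw [← prod_filter_mul_prod_filter_not univ (fun j => sign (g j) = -1),
    prod_congr rfl (fun j hj => (mem_filter.1 hj).2), prod_const,
    prod_eq_one (fun j hj => (Int.units_eq_one_or _).resolve_right (mem_filter.1 hj).2),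
    mul_one] at hsign
  exact (neg_one_pow_eq_one_iff_even (by decide)).1 hsign

end DihedralGroup

open DihedralGroup in
theorem stmt_15_general (h : Fin 4 → DihedralGroup 12)
    (hprod : h 0 * h 1 * h 2 * h 3 = 1)
    (hord : (∃ i, orderOf (h i) = 3 ∧ ∀ j, j ≠ i → orderOf (h j) = 2) ∨
            (∃ i, orderOf (h i) = 4 ∧ ∀ j, j ≠ i → orderOf (h j) = 2)) :
    ∃ i, h i = DihedralGroup.r 6 := by
  by_contra! hne
  obtain ⟨i, hi, hinv⟩ :
      ∃ i, orderOf (h i) ≠ 2 ∧ ∀ j, j ≠ i → orderOf (h j) = 2 := by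
    rcases hord with ⟨i, hi, hj⟩ | ⟨i, hi, hj⟩ <;> exact ⟨i, by omega, hj⟩
  have hreflections : ({j | sign (h j) = -1} : Finset (Fin 4)) = {i}ᶜ := by
    ext j
    by_cases hj : j = i
    · subst hj; simp [sign_eq_one_of_orderOf_ne_two hi]
    · simp [hj, sign_eq_neg_one_of_orderOf_eq_two (hinv j hj) (hne j)]
  have heven := even_card_sign_eq_neg_one (g := h) <| by
    simpa [List.ofFn_succ, mul_assoc] using hprod
  rw [hreflections, card_compl, card_singleton] at heven
  exact absurd heven (by decide)

/-- In the dihedral group of order 24 (with presentation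
`⟨x, y ∣ x^12 = y^2 = 1, y x y = x⁻¹⟩`, realized as `DihedralGroup 12` where `x` is the
rotation `r 1`), any spherical system of four generators `h 0, h 1, h 2, h 3`
(i.e. `h 0 * h 1 * h 2 * h 3 = 1` and the `h i` generate `G`) in which three of the
`h i` have order 2 and the remaining one has order 3 or order 4 must contain the
central involution `x^6 = r 6`. -/
theorem stmt_15 (h : Fin 4 → DihedralGroup 12)
    (hprod : h 0 * h 1 * h 2 * h 3 = 1)
    (hgen : Subgroup.closure (Set.range h) = ⊤)
    (hord : (∃ i, orderOf (h i) = 3 ∧ ∀ j, j ≠ i → orderOf (h j) = 2) ∨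
            (∃ i, orderOf (h i) = 4 ∧ ∀ j, j ≠ i → orderOf (h j) = 2)) :
    ∃ i, h i = DihedralGroup.r 6 :=
  stmt_15_general h hprod hord
end
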